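/- arXiv:2205.06916 — 12 statements merged into one kernel-verified Lean document; each statement's English description precedes it below -/
import Mathlib

section
/- If a combinatorial disjunctive constraint CDC(S) admits a junction tree, then every minimal infeasible set has cardinality at most 2; equivalently, CDC(S) is pairwise IB-representable. -/
/-- A junction tree for a labeled collection of finite index sets: a tree `G` on
vertex type `ι` with labels `f : ι → Finset α` such that for any two vertices
`i, j`, every vertex on the unique path between them contains `f i ∩ f j`, and
the middle set `f a ∩ f b` of every edge `s(a, b)` on the path contains `f i ∩ f j`. -/
def IsJunctionTree {ι α : Type*} [DecidableEq α] (G : SimpleGraph ι)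
    (f : ι → Finset α) : Prop :=
  G.IsTree ∧ ∀ (i j : ι) (p : G.Walk i j), p.IsPath →
    (∀ x ∈ p.support, f i ∩ f j ⊆ f x) ∧
    (∀ a b : ι, s(a, b) ∈ p.edges → f i ∩ f j ⊆ f a ∩ f b)

/-- If every edge of a walk has both endpoints in `A` or both endpoints in `B`,
and the walk starts in `A` and ends in `B`, then some vertex of the walk lies in
both `A` and `B`. -/
lemma exists_mem_inter_of_walk {V : Type*} {G : SimpleGraph V} (A B : Set V) :
    ∀ {u v : V} (r : G.Walk u v),
      (∀ a b : V, s(a, b) ∈ r.edges → (a ∈ A ∧ b ∈ A) ∨ (a ∈ B ∧ b ∈ B)) →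
      u ∈ A → v ∈ B → ∃ m ∈ r.support, m ∈ A ∧ m ∈ B := by
  intro u v r
  induction r with
  | nil => exact fun _ hu hv => ⟨_, by simp, hu, hv⟩
  | @cons u w v hadj r' ih =>
    intro h hu hv
    rcases h u w (by simp) with ⟨_, hb⟩ | ⟨ha, _⟩
    · obtain ⟨m, hm, hmA, hmB⟩ := ih (fun a b hab => h a b (by simp [hab])) hb hv
      exact ⟨m, by simp [hm], hmA, hmB⟩
    · exact ⟨u, by simp, hu, ha⟩

/-- If `CDC(𝒮)` admits a junction tree, then every minimal infeasible
set has cardinality at most 2 (i.e. `CDC(𝒮)` is pairwise IB-representable). -/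
theorem junctionTree_pairwise_IB_representable {α : Type*} [DecidableEq α]
    (𝒮 : Finset (Finset α)) (T : SimpleGraph {S // S ∈ 𝒮})
    (hT : IsJunctionTree T (fun S => (S : Finset α)))
    (I : Finset α) (hIJ : I ⊆ 𝒮.sup id)
    (hInfeasible : ¬ ∃ S ∈ 𝒮, I ⊆ S)
    (hMinimal : ∀ I' ⊂ I, ∃ S ∈ 𝒮, I' ⊆ S) :
    I.card ≤ 2 := by
  by_contra hcard
  push_neg at hcard
  -- get three distinct elements x, y, z of I
  obtain ⟨x, hx⟩ : I.Nonempty := Finset.card_pos.mp (by omega)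
  obtain ⟨y, hy⟩ : (I.erase x).Nonempty := by
    rw [← Finset.card_pos, Finset.card_erase_of_mem hx]; omega
  obtain ⟨z, hz⟩ : ((I.erase x).erase y).Nonempty := by
    rw [← Finset.card_pos, Finset.card_erase_of_mem hy, Finset.card_erase_of_mem hx]; omega
  have hyI : y ∈ I := Finset.mem_of_mem_erase hy
  have hzI : z ∈ I := Finset.mem_of_mem_erase (Finset.mem_of_mem_erase hz)
  have hyx : y ≠ x := Finset.ne_of_mem_erase hy
  have hzy : z ≠ y := Finset.ne_of_mem_erase hz
  have hzx : z ≠ x := Finset.ne_of_mem_erase (Finset.mem_of_mem_erase hz)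
  -- feasible sets covering I minus one element
  obtain ⟨Sx, hSx𝒮, hSx⟩ := hMinimal (I.erase x) (Finset.erase_ssubset hx)
  obtain ⟨Sy, hSy𝒮, hSy⟩ := hMinimal (I.erase y) (Finset.erase_ssubset hyI)
  obtain ⟨Sz, hSz𝒮, hSz⟩ := hMinimal (I.erase z) (Finset.erase_ssubset hzI)
  set vx : {S // S ∈ 𝒮} := ⟨Sx, hSx𝒮⟩
  set vy : {S // S ∈ 𝒮} := ⟨Sy, hSy𝒮⟩
  set vz : {S // S ∈ 𝒮} := ⟨Sz, hSz𝒮⟩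
  -- paths between them
  obtain ⟨hTree, hJ⟩ := hT
  have hreach1 : T.Reachable vx vy := hTree.isConnected.preconnected vx vy
  have hreach2 : T.Reachable vy vz := hTree.isConnected.preconnected vy vz
  let p : T.Walk vx vy := hreach1.some.bypass
  let q : T.Walk vy vz := hreach2.some.bypass
  have hp : p.IsPath := SimpleGraph.Walk.bypass_isPath _
  have hq : q.IsPath := SimpleGraph.Walk.bypass_isPath _
  let r : T.Walk vx vz := (p.append q).bypass
  have hr : r.IsPath := SimpleGraph.Walk.bypass_isPath _
  have hredges : ∀ e ∈ r.edges, e ∈ p.edges ∨ e ∈ q.edges := by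
    intro e he
    have := SimpleGraph.Walk.edges_bypass_subset _ he
    rw [SimpleGraph.Walk.edges_append, List.mem_append] at this
    exact this
  -- find a vertex m on r which is also on p and on q
  obtain ⟨m, hmr, hmp, hmq⟩ := exists_mem_inter_of_walk
      {v | v ∈ p.support} {v | v ∈ q.support} r
      (by
        intro a b hab
        rcases hredges _ hab with h' | h'
        · exact Or.inl ⟨SimpleGraph.Walk.fst_mem_support_of_mem_edges _ h',
            SimpleGraph.Walk.snd_mem_support_of_mem_edges _ h'⟩
        · exact Or.inr ⟨SimpleGraph.Walk.fst_mem_support_of_mem_edges _ h',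
            SimpleGraph.Walk.snd_mem_support_of_mem_edges _ h'⟩)
      (by simp [SimpleGraph.Walk.start_mem_support])
      (by simp [SimpleGraph.Walk.end_mem_support])
  -- junction properties
  have h1 : (Sx : Finset α) ∩ Sy ⊆ (m : Finset α) := (hJ vx vy p hp).1 m hmp
  have h2 : (Sy : Finset α) ∩ Sz ⊆ (m : Finset α) := (hJ vy vz q hq).1 m hmq
  have h3 : (Sx : Finset α) ∩ Sz ⊆ (m : Finset α) := (hJ vx vz r hr).1 m hmr
  -- conclude I ⊆ m, contradiction
  apply hInfeasible
  refine ⟨(m : Finset α), m.2, ?_⟩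
  intro w hw
  by_cases hwx : w = x
  · subst hwx
    exact h2 (Finset.mem_inter.mpr ⟨hSy (Finset.mem_erase.mpr ⟨fun h => hyx h.symm, hw⟩),
      hSz (Finset.mem_erase.mpr ⟨fun h => hzx h.symm, hw⟩)⟩)
  by_cases hwy : w = y
  · subst hwy
    exact h3 (Finset.mem_inter.mpr ⟨hSx (Finset.mem_erase.mpr ⟨hwx, hw⟩),
      hSz (Finset.mem_erase.mpr ⟨fun h => hzy h.symm, hw⟩)⟩)
  · exact h1 (Finset.mem_inter.mpr ⟨hSx (Finset.mem_erase.mpr ⟨hwx, hw⟩),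
      hSy (Finset.mem_erase.mpr ⟨hwy, hw⟩)⟩)
end

section
/- Let CDC(S) be a combinatorial disjunctive constraint with intersection graph K_S (the complete graph on vertex set S, where the edge between S1 and S2 has weight |S1 ∩ S2|). Then any spanning tree of K_S that is not a maximum spanning tree cannot be a junction tree of CDC(S). -/
open scoped Classical in
/-- The weight of a spanning tree `T` of the intersection graph `K_𝒮`:
the sum over the edges of `T` of the cardinality of the middle set `S1 ∩ S2`. -/
noncomputable def jtWeight {α : Type*} [DecidableEq α] (𝒮 : Finset (Finset α))
    (T : SimpleGraph {S // S ∈ 𝒮}) : ℕ :=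
  ∑ e : Sym2 {S // S ∈ 𝒮}, if e ∈ T.edgeSet then
    Sym2.lift ⟨fun (A B : {S // S ∈ 𝒮}) => ((A : Finset α) ∩ (B : Finset α)).card,
      fun A B => by simp [Finset.inter_comm]⟩ e
  else 0

/-!
Split the weight by elements: `jtWeight 𝒮 T = ∑ₓ eₓ(T)`, where `eₓ(T)` is the number of edges of
the subgraph of `T` induced on `𝒮ₓ = {S ∈ 𝒮 | x ∈ S}`. For any tree this induced subgraph is a
forest, so `eₓ(T) ≤ |𝒮ₓ| - 1`. In a junction tree the path between two members of `𝒮ₓ` stays in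
`𝒮ₓ`, so the induced subgraph is a tree and `eₓ(T) = |𝒮ₓ| - 1`. Hence junction trees are maximum
spanning trees.
-/

open Finset SimpleGraph

namespace SimpleGraph

variable {V : Type*} {G : SimpleGraph V}

theorem IsAcyclic.card_edgeSet_add_one_le [Finite V] [Nonempty V] (hG : G.IsAcyclic) :
    Nat.card G.edgeSet + 1 ≤ Nat.card V := by
  obtain ⟨T, hGT, -, hT⟩ := connected_top.exists_isTree_le_of_le_of_isAcyclic le_top hG
  rw [← (isTree_iff_connected_and_card.mp hT).2]
  exact Nat.add_le_add_right (Nat.card_mono (Set.toFinite _) (edgeSet_mono hGT)) 1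

end SimpleGraph

section

variable {ι α : Type*} [DecidableEq α] {G : SimpleGraph ι} {f : ι → Finset α}

theorem IsJunctionTree.isTree_induce (hG : IsJunctionTree G f) {x : α} {i : ι} (hi : x ∈ f i) :
    (G.induce {j | x ∈ f j}).IsTree := by
  refine ⟨induce_connected_of_patches i hi fun {j} hj ↦ ?_, hG.1.isAcyclic.induce _⟩
  obtain ⟨p, hp⟩ := (hG.1.connected i j).exists_isPath
  exact ⟨{k | k ∈ p.support}, fun k hk ↦ (hG.2 i j p hp).1 k hk (mem_inter.2 ⟨hi, hj⟩),
    p.start_mem_support, p.end_mem_support, p.connected_induce_support.preconnected _ _⟩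

theorem IsJunctionTree.card_edgeSet_induce_le [Finite ι] (hG : IsJunctionTree G f)
    {H : SimpleGraph ι} (hH : H.IsAcyclic) {x : α} {i : ι} (hi : x ∈ f i) :
    Nat.card (H.induce {j | x ∈ f j}).edgeSet ≤ Nat.card (G.induce {j | x ∈ f j}).edgeSet := by
  have : Nonempty {j | x ∈ f j} := ⟨⟨i, hi⟩⟩
  have hH' := (hH.induce {j | x ∈ f j}).card_edgeSet_add_one_le
  have hG' := (isTree_iff_connected_and_card.mp (hG.isTree_induce hi)).2
  omega

theorem jtWeight_eq_sum_card_edgeSet_induce (𝒮 : Finset (Finset α))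
    (G : SimpleGraph {S // S ∈ 𝒮}) :
    jtWeight 𝒮 G = ∑ x ∈ 𝒮.sup id, Nat.card (G.induce {S | x ∈ S.1}).edgeSet := by
  classical
  unfold jtWeight
  simp only [← mem_edgeFinset]
  rw [sum_ite_mem, univ_inter]
  calc _ = ∑ e ∈ G.edgeFinset, #{x ∈ 𝒮.sup id | e ∈ {S | x ∈ S.1}.toFinset.sym2} :=
        sum_congr rfl fun e _ ↦ ?_
    _ = ∑ x ∈ 𝒮.sup id, #{e ∈ G.edgeFinset | e ∈ {S | x ∈ S.1}.toFinset.sym2} :=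
        sum_card_bipartiteAbove_eq_sum_card_bipartiteBelow _
    _ = _ := sum_congr rfl fun x _ ↦ ?_
  · induction e using Sym2.ind with
    | _ A B =>
      simp only [Sym2.lift_mk, Set.toFinset_ofPred, mem_sym2_iff, Sym2.mem_iff, mem_filter,
        mem_univ, true_and, forall_eq_or_imp, forall_eq]
      congr 1
      ext x
      simp only [mem_inter, mem_filter]
      exact ⟨fun hx ↦ ⟨le_sup (f := id) A.2 hx.1, hx⟩, And.right⟩
  · rw [filter_mem_eq_inter, ← map_edgeFinset_induce, card_map, Nat.card_eq_fintype_card,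
      edgeFinset_card]

theorem jtWeight_le_of_isJunctionTree {𝒮 : Finset (Finset α)} {T T' : SimpleGraph {S // S ∈ 𝒮}}
    (hT : IsJunctionTree T (fun S => (S : Finset α))) (hT' : T'.IsAcyclic) :
    jtWeight 𝒮 T' ≤ jtWeight 𝒮 T := by
  rw [jtWeight_eq_sum_card_edgeSet_induce, jtWeight_eq_sum_card_edgeSet_induce]
  refine sum_le_sum fun x hx ↦ ?_
  obtain ⟨S, hS, hxS⟩ := mem_sup.1 hx
  exact hT.card_edgeSet_induce_le hT' (i := ⟨S, hS⟩) hxS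

end

theorem non_max_spanning_tree_not_junction_tree_general {α : Type*} [DecidableEq α]
    (𝒮 : Finset (Finset α)) (T : SimpleGraph {S // S ∈ 𝒮})
    (hNotMax : ∃ T' : SimpleGraph {S // S ∈ 𝒮}, T'.IsTree ∧ jtWeight 𝒮 T < jtWeight 𝒮 T') :
    ¬ IsJunctionTree T (fun S => (S : Finset α)) := by
  intro hT
  obtain ⟨T', hT', hlt⟩ := hNotMax
  exact (jtWeight_le_of_isJunctionTree hT hT'.isAcyclic).not_gt hlt

/-- Any spanning tree of the intersection graph `K_𝒮` that is not a
maximum spanning tree cannot be a junction tree of `CDC(𝒮)`.  (Spanning trees of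
the complete graph `K_𝒮` are exactly the trees on the vertex set `𝒮`.) -/
theorem non_max_spanning_tree_not_junction_tree {α : Type*} [DecidableEq α]
    (𝒮 : Finset (Finset α)) (T : SimpleGraph {S // S ∈ 𝒮}) (hT : T.IsTree)
    (hNotMax : ∃ T' : SimpleGraph {S // S ∈ 𝒮}, T'.IsTree ∧ jtWeight 𝒮 T < jtWeight 𝒮 T') :
    ¬ IsJunctionTree T (fun S => (S : Finset α)) :=
  non_max_spanning_tree_not_junction_tree_general 𝒮 T hNotMax
end

section
/- Let T1 and T2 be two maximum spanning trees of the intersection graph K_S of CDC(S) with dist(T1, T2) = 1. If T1 is a junction tree of CDC(S), then T2 is also a junction tree of CDC(S). -/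
/-- A maximum spanning tree of the intersection graph `K_𝒮`. -/
def IsMaxSpanningTree {α : Type*} [DecidableEq α] (𝒮 : Finset (Finset α))
    (T : SimpleGraph {S // S ∈ 𝒮}) : Prop :=
  T.IsTree ∧ ∀ T' : SimpleGraph {S // S ∈ 𝒮}, T'.IsTree → jtWeight 𝒮 T' ≤ jtWeight 𝒮 T


/-!
Write `T₂ = T₁ - e + f` with `e = AB` and `f = CD`. The weights of the two maximum trees differ by
`|C ∩ D| - |A ∩ B|`, so `|A ∩ B| = |C ∩ D|`. For a `T₂`-path from `i` to `j` through `f`, the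
`T₁`-path from `i` to `j` passes through `e`, since otherwise it would also be a `T₂`-path and
hence the same path; so `i ∩ j ⊆ A ∩ B`. For the path `CD` this gives `C ∩ D ⊆ A ∩ B`, hence
equality. A `T₂`-path avoiding `f` is a `T₁`-path, and one through `f` splits at `f` into two
`T₁`-paths, from `i` to an end of `f` and from the other end to `j`; as `i ∩ j ⊆ C ∩ D`, every
vertex on them contains `i ∩ j`.
-/

theorem Set.ncard_sdiff_comm {β : Type*} {s t : Set β} (hs : s.Finite) (ht : t.Finite)
    (h : s.ncard = t.ncard) : (s \ t).ncard = (t \ s).ncard := by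
  have h₁ := Set.ncard_sdiff_add_ncard s t hs ht
  have h₂ := Set.ncard_sdiff_add_ncard t s ht hs
  rw [Set.union_comm] at h₂
  omega

namespace SimpleGraph

variable {V : Type*}

theorem Walk.exists_eq_append_cons_of_mem_edges {G : SimpleGraph V} {u v : V} {e : Sym2 V}
    (p : G.Walk u v) (he : e ∈ p.edges) :
    ∃ (x y : V) (h : G.Adj x y) (q : G.Walk u x) (r : G.Walk y v),
      s(x, y) = e ∧ p = q.append (cons h r) := by
  induction p with
  | nil => simp at he
  | @cons u w v h p ih =>
    rcases List.mem_cons.mp he with rfl | he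
    · exact ⟨u, w, h, nil, p, rfl, rfl⟩
    · obtain ⟨x, y, hxy, q, r, rfl, rfl⟩ := ih he
      exact ⟨x, y, hxy, cons h q, r, rfl, rfl⟩

theorem Walk.mem_edgeSet_of_insert_eq {G H : SimpleGraph V} {e e' : Sym2 V}
    (hGH : insert e' H.edgeSet = insert e G.edgeSet) {u v : V} (p : H.Walk u v)
    (he : e ∉ p.edges) : ∀ x ∈ p.edges, x ∈ G.edgeSet := fun _ hx =>
  (Set.mem_insert_iff.mp (hGH ▸ Set.mem_insert_of_mem e' (p.edges_subset_edgeSet hx))).resolve_left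
    (ne_of_mem_of_not_mem hx he)

theorem IsTree.ncard_edgeSet_eq [Finite V] {T T' : SimpleGraph V} (hT : T.IsTree)
    (hT' : T'.IsTree) : T.edgeSet.ncard = T'.edgeSet.ncard := by
  have h := (isTree_iff_connected_and_card.mp hT).2
  have h' := (isTree_iff_connected_and_card.mp hT').2
  rw [Nat.card_coe_set_eq] at h h'
  omega

variable {α : Type*} [DecidableEq α]

def RunningIntersection (G : SimpleGraph V) (f : V → Finset α) : Prop :=
  ∀ (i j : V) (p : G.Walk i j), p.IsPath → ∀ x ∈ p.support, f i ∩ f j ⊆ f x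

variable {G H : SimpleGraph V} {f : V → Finset α}

theorem RunningIntersection.inter_subset_of_mem_edges (hG : G.RunningIntersection f)
    {i j a b : V} {p : G.Walk i j} (hp : p.IsPath) (hab : s(a, b) ∈ p.edges) :
    f i ∩ f j ⊆ f a ∩ f b :=
  Finset.subset_inter (hG i j p hp a (p.fst_mem_support_of_mem_edges hab))
    (hG i j p hp b (p.snd_mem_support_of_mem_edges hab))

/-! Below, `insert s(c, d) G.edgeSet = insert s(a, b) H.edgeSet` with `s(c, d) ∉ G.edgeSet` says
that `H` arises from `G` by exchanging the edge `s(a, b)` for `s(c, d)`. -/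

section Exchange

variable {a b c d : V}

theorem RunningIntersection.inter_subset_of_exchange_of_notMem (hG : G.RunningIntersection f)
    (hGH : insert s(c, d) G.edgeSet = insert s(a, b) H.edgeSet) {i j : V} {p : H.Walk i j}
    (hp : p.IsPath) (hcd : s(c, d) ∉ p.edges) : ∀ x ∈ p.support, f i ∩ f j ⊆ f x := by
  have hpG := p.mem_edgeSet_of_insert_eq hGH.symm hcd
  simpa using hG i j (p.transfer G hpG) (hp.transfer hpG)

theorem RunningIntersection.inter_subset_of_exchange_of_mem (hG : G.RunningIntersection f)
    (hGc : G.Connected) (hH : H.IsAcyclic)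
    (hGH : insert s(c, d) G.edgeSet = insert s(a, b) H.edgeSet) (hcdG : s(c, d) ∉ G.edgeSet)
    {i j : V} {p : H.Walk i j} (hp : p.IsPath) (hcd : s(c, d) ∈ p.edges) :
    f i ∩ f j ⊆ f a ∩ f b := by
  obtain ⟨r, hr⟩ := hGc.preconnected.exists_isPath i j
  suffices hab : s(a, b) ∈ r.edges from hG.inter_subset_of_mem_edges hr hab
  by_contra hab
  have hrH := r.mem_edgeSet_of_insert_eq hGH hab
  have hrp : r.transfer H hrH = p :=
    congrArg Subtype.val ((hH.subsingleton_path i j).elim ⟨_, hr.transfer hrH⟩ ⟨p, hp⟩)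
  exact hcdG (r.edges_subset_edgeSet (by simpa [← hrp] using hcd))

theorem RunningIntersection.of_exchange (hG : G.RunningIntersection f) (hGc : G.Connected)
    (hH : H.IsAcyclic) (hGH : insert s(c, d) G.edgeSet = insert s(a, b) H.edgeSet)
    (hcdG : s(c, d) ∉ G.edgeSet) (hmid : f a ∩ f b ⊆ f c ∩ f d) :
    H.RunningIntersection f := by
  intro i j p hp x hx
  by_cases hcd : s(c, d) ∉ p.edges
  · exact hG.inter_subset_of_exchange_of_notMem hGH hp hcd x hx
  rw [not_not] at hcd
  have hij : f i ∩ f j ⊆ f c ∩ f d :=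
    (hG.inter_subset_of_exchange_of_mem hGc hH hGH hcdG hp hcd).trans hmid
  have hends : ∀ w ∈ s(c, d), f c ∩ f d ⊆ f w := by
    intro w hw
    rcases Sym2.mem_iff.mp hw with rfl | rfl
    exacts [Finset.inter_subset_left, Finset.inter_subset_right]
  obtain ⟨u, v, huv, q, r, huv_eq, rfl⟩ := p.exists_eq_append_cons_of_mem_edges hcd
  have hnodup : (q.edges ++ s(u, v) :: r.edges).Nodup := by simpa using hp.edges_nodup
  have hq : s(c, d) ∉ q.edges :=
    huv_eq ▸ fun h => List.disjoint_of_nodup_append hnodup h List.mem_cons_self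
  have hr : s(c, d) ∉ r.edges := huv_eq ▸ (List.nodup_cons.mp hnodup.of_append_right).1
  rw [Walk.support_append, Walk.support_cons, List.tail_cons, List.mem_append] at hx
  rcases hx with hx | hx
  · have hu := hends u (huv_eq ▸ Sym2.mem_mk_left u v)
    exact (Finset.subset_inter Finset.inter_subset_left (hij.trans hu)).trans
      (hG.inter_subset_of_exchange_of_notMem hGH hp.of_append_left hq x hx)
  · have hv := hends v (huv_eq ▸ Sym2.mem_mk_right u v)
    exact (Finset.subset_inter (hij.trans hv) Finset.inter_subset_right).trans
      (hG.inter_subset_of_exchange_of_notMem hGH hp.of_append_right.of_cons hr x hx)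

end Exchange

end SimpleGraph

open SimpleGraph

theorem isJunctionTree_iff {ι α : Type*} [DecidableEq α] {G : SimpleGraph ι}
    {f : ι → Finset α} : IsJunctionTree G f ↔ G.IsTree ∧ G.RunningIntersection f :=
  and_congr_right fun _ =>
    ⟨fun h i j p hp => (h i j p hp).1,
      fun h i j p hp => ⟨h i j p hp, fun _ _ hab => h.inter_subset_of_mem_edges hp hab⟩⟩

section Weight

variable {α : Type*} [DecidableEq α] (𝒮 : Finset (Finset α))

def midCard : Sym2 {S // S ∈ 𝒮} → ℕ :=
  Sym2.lift ⟨fun A B => ((A : Finset α) ∩ (B : Finset α)).card,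
    fun A B => by simp [Finset.inter_comm]⟩

variable {𝒮}

theorem jtWeight_eq_finsum (T : SimpleGraph {S // S ∈ 𝒮}) :
    jtWeight 𝒮 T = ∑ᶠ e ∈ T.edgeSet, midCard 𝒮 e := by
  classical
  rw [finsum_mem_def, finsum_eq_sum_of_fintype]
  simp [jtWeight, Set.indicator_apply, midCard]

theorem jtWeight_add_midCard_of_insert_eq {T T' : SimpleGraph {S // S ∈ 𝒮}}
    {e e' : Sym2 {S // S ∈ 𝒮}} (h : insert e' T.edgeSet = insert e T'.edgeSet)
    (he' : e' ∉ T.edgeSet) (he : e ∉ T'.edgeSet) :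
    jtWeight 𝒮 T + midCard 𝒮 e' = jtWeight 𝒮 T' + midCard 𝒮 e := by
  rw [jtWeight_eq_finsum, jtWeight_eq_finsum, add_comm, add_comm _ (midCard 𝒮 e),
    ← finsum_mem_insert _ he' (Set.toFinite _), ← finsum_mem_insert _ he (Set.toFinite _), h]

theorem IsMaxSpanningTree.midCard_eq_of_insert_eq {T T' : SimpleGraph {S // S ∈ 𝒮}}
    (hT : IsMaxSpanningTree 𝒮 T) (hT' : IsMaxSpanningTree 𝒮 T') {e e' : Sym2 {S // S ∈ 𝒮}}
    (h : insert e' T.edgeSet = insert e T'.edgeSet) (he' : e' ∉ T.edgeSet)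
    (he : e ∉ T'.edgeSet) : midCard 𝒮 e = midCard 𝒮 e' := by
  have hsum := jtWeight_add_midCard_of_insert_eq h he' he
  have hweight := le_antisymm (hT'.2 T hT.1) (hT.2 T' hT'.1)
  omega

end Weight

/-- If `T1`, `T2` are maximum spanning trees of the intersection graph
at distance 1 and `T1` is a junction tree of `CDC(𝒮)`, then so is `T2`. -/
theorem junctionTree_of_adjacent_maxSpanningTree {α : Type*} [DecidableEq α]
    (𝒮 : Finset (Finset α)) (T1 T2 : SimpleGraph {S // S ∈ 𝒮})
    (h1 : IsMaxSpanningTree 𝒮 T1) (h2 : IsMaxSpanningTree 𝒮 T2)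
    (hdist : (T1.edgeSet \ T2.edgeSet).ncard = 1)
    (hJ : IsJunctionTree T1 (fun S => (S : Finset α))) :
    IsJunctionTree T2 (fun S => (S : Finset α)) := by
  obtain ⟨e, he⟩ := Set.ncard_eq_one.mp hdist
  obtain ⟨e', he'⟩ := Set.ncard_eq_one.mp <|
    (Set.ncard_sdiff_comm (Set.toFinite _) (Set.toFinite _)
      (h1.1.ncard_edgeSet_eq h2.1)).symm.trans hdist
  have hU : insert e' T1.edgeSet = insert e T2.edgeSet := by
    rw [← Set.union_singleton, ← he', Set.union_sdiff_self, ← Set.union_singleton, ← he,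
      Set.union_sdiff_self, Set.union_comm]
  have he2 : e ∈ T1.edgeSet \ T2.edgeSet := he ▸ rfl
  have he'1 : e' ∈ T2.edgeSet \ T1.edgeSet := he' ▸ rfl
  have hmid := h1.midCard_eq_of_insert_eq h2 hU he'1.2 he2.2
  rcases e with ⟨A, B⟩
  rcases e' with ⟨C, D⟩
  have hRI := (isJunctionTree_iff.mp hJ).2
  have hCD : (C : Finset α) ∩ D ⊆ (A : Finset α) ∩ B :=
    hRI.inter_subset_of_exchange_of_mem h1.1.connected h2.1.isAcyclic hU he'1.2
      (Adj.isPath_toWalk (T2.mem_edgeSet.mp he'1.1)) (by simp)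
  have hAB := Finset.eq_of_subset_of_card_le hCD hmid.le
  exact isJunctionTree_iff.mpr
    ⟨h2.1, hRI.of_exchange h1.1.connected h2.1.isAcyclic hU he'1.2 hAB.ge⟩
end

section
/- CDC(S) admits a junction tree if and only if every maximum spanning tree of its intersection graph K_S is a junction tree of CDC(S). -/
/-
For `x` in the union of `𝒮`, let `U x = vertsContaining 𝒮 x` be the set of members of `𝒮`
containing `x`.
Counting elementwise, the weight of a spanning tree `T` of `K_𝒮` is `∑ x, e_T(U x)`, where
`e_T(U)` is the number of edges of `T` inside `U`. Since `T` is acyclic, `e_T(U x) ≤ |U x| - 1`,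
with equality iff `U x` induces a connected subgraph of `T`, and `T` is a junction tree exactly
when every `U x` does. So the junction trees are the spanning trees attaining the bound
`∑ x, (|U x| - 1)`: if one exists, the bound is the maximum weight, and every maximum spanning
tree attains it.
-/

namespace SimpleGraph

open Finset

variable {V : Type*} {G : SimpleGraph V}

lemma IsAcyclic.exists_isTree_ge [Nonempty V] (hG : G.IsAcyclic) : ∃ T, G ≤ T ∧ T.IsTree := by
  obtain ⟨T, hGT, -, hT⟩ := connected_top.exists_isTree_le_of_le_of_isAcyclic le_top hG
  exact ⟨T, hGT, hT⟩

lemma IsAcyclic.support_subset_of_preconnected_induce (hG : G.IsAcyclic) {s : Set V}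
    (hs : (G.induce s).Preconnected) {u v : V} (hu : u ∈ s) (hv : v ∈ s) {p : G.Walk u v}
    (hp : p.IsPath) : ∀ w ∈ p.support, w ∈ s := by
  classical
  obtain ⟨q⟩ := hs ⟨u, hu⟩ ⟨v, hv⟩
  let q' := q.map (Embedding.induce s).toHom
  have hq' : ∀ w ∈ q'.support, w ∈ s := by
    simp only [q', Walk.support_map, List.mem_map]
    rintro _ ⟨w, -, rfl⟩
    exact w.2
  have hpq : p = q'.toPath.1 := congrArg Subtype.val ((hG.subsingleton_path u v).elim ⟨p, hp⟩ _)
  exact fun w hw => hq' w (q'.support_toPath_subset_support (hpq ▸ hw))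

lemma IsTree.isJunctionTree_iff {α : Type*} [DecidableEq α] (hG : G.IsTree) (f : V → Finset α) :
    IsJunctionTree G f ↔ ∀ x, (G.induce {v | x ∈ f v}).Preconnected := by
  refine ⟨fun hJ x ⟨i, hi⟩ ⟨j, hj⟩ => ?_, fun h => ⟨hG, fun i j p hp => ?_⟩⟩
  · classical
    obtain ⟨p⟩ := hG.connected.preconnected i j
    have hx : ∀ w ∈ p.toPath.1.support, x ∈ f w := fun w hw =>
      (hJ.2 i j _ p.toPath.2).1 w hw (mem_inter.2 ⟨hi, hj⟩)
    exact ⟨p.toPath.1.induce _ hx⟩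
  · have hsub : ∀ w ∈ p.support, f i ∩ f j ⊆ f w := fun w hw x hx =>
      hG.isAcyclic.support_subset_of_preconnected_induce (h x) (mem_inter.1 hx).1
        (mem_inter.1 hx).2 hp w hw
    exact ⟨hsub, fun a b hab => subset_inter (hsub a (p.fst_mem_support_of_mem_edges hab))
      (hsub b (p.snd_mem_support_of_mem_edges hab))⟩

variable [Fintype V] [Fintype G.edgeSet]

lemma IsAcyclic.card_edgeFinset_le_card_sub_one (hG : G.IsAcyclic) :
    #G.edgeFinset ≤ Fintype.card V - 1 := by
  cases isEmpty_or_nonempty V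
  · simp [Subsingleton.elim G ⊥]
  classical
  obtain ⟨T, hGT, hT⟩ := hG.exists_isTree_ge
  have := hT.card_edgeFinset
  have := card_le_card (edgeFinset_mono hGT)
  omega

lemma IsAcyclic.card_edgeFinset_eq_card_sub_one_iff (hG : G.IsAcyclic) :
    #G.edgeFinset = Fintype.card V - 1 ↔ G.Preconnected := by
  cases isEmpty_or_nonempty V
  · exact iff_of_true (by simp [Subsingleton.elim G ⊥]) fun u => isEmptyElim u
  classical
  refine ⟨fun hcard => ?_, fun hconn => ?_⟩
  · obtain ⟨T, hGT, hT⟩ := hG.exists_isTree_ge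
    have hTcard := hT.card_edgeFinset
    have : G.edgeFinset = T.edgeFinset :=
      eq_of_subset_of_card_le (edgeFinset_mono hGT) (by omega)
    exact edgeFinset_inj.mp this ▸ hT.connected.preconnected
  · have := (show G.IsTree from ⟨⟨hconn⟩, hG⟩).card_edgeFinset
    omega

end SimpleGraph

open Finset SimpleGraph
open scoped Classical

section

variable {α : Type*} [DecidableEq α] (𝒮 : Finset (Finset α))

def vertsContaining (x : α) : Set {S // S ∈ 𝒮} := {S | x ∈ (S : Finset α)}

lemma jtWeight_eq_sum_card_edgeFinset_induce (T : SimpleGraph {S // S ∈ 𝒮}) :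
    jtWeight 𝒮 T = ∑ x ∈ 𝒮.sup id, #(T.induce (vertsContaining 𝒮 x)).edgeFinset := by
  calc jtWeight 𝒮 T
      = ∑ e ∈ T.edgeFinset, ∑ x ∈ 𝒮.sup id,
          if e ∈ (vertsContaining 𝒮 x).toFinset.sym2 then 1 else 0 := by
        rw [jtWeight, ← sum_filter]
        refine sum_congr (by ext; simp) fun e _ => ?_
        induction e using Sym2.ind with
        | _ A B =>
          rw [Sym2.lift_mk, sum_boole, Nat.cast_id]
          change #((A : Finset α) ∩ B) = _
          congr 1
          ext x
          rw [mem_filter, mk_mem_sym2_iff, Set.mem_toFinset, Set.mem_toFinset, mem_inter]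
          exact ⟨fun h => ⟨le_sup (f := id) A.2 h.1, h⟩, And.right⟩
    _ = ∑ x ∈ 𝒮.sup id, #(T.edgeFinset ∩ (vertsContaining 𝒮 x).toFinset.sym2) := by
        rw [sum_comm]
        refine sum_congr rfl fun x _ => ?_
        rw [sum_boole, Nat.cast_id, filter_mem_eq_inter]
    _ = _ := by
        refine sum_congr rfl fun x _ => ?_
        rw [← map_edgeFinset_induce, card_map]

noncomputable def jtWeightBound : ℕ :=
  ∑ x ∈ 𝒮.sup id, (Fintype.card (vertsContaining 𝒮 x) - 1)

lemma jtWeight_le_jtWeightBound {T : SimpleGraph {S // S ∈ 𝒮}} (hT : T.IsAcyclic) :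
    jtWeight 𝒮 T ≤ jtWeightBound 𝒮 := by
  rw [jtWeight_eq_sum_card_edgeFinset_induce]
  exact sum_le_sum fun x _ => (hT.induce _).card_edgeFinset_le_card_sub_one

lemma jtWeight_eq_jtWeightBound_iff {T : SimpleGraph {S // S ∈ 𝒮}} (hT : T.IsTree) :
    jtWeight 𝒮 T = jtWeightBound 𝒮 ↔ IsJunctionTree T (fun S => (S : Finset α)) := by
  rw [hT.isJunctionTree_iff, jtWeight_eq_sum_card_edgeFinset_induce, jtWeightBound,
    sum_eq_sum_iff_of_le fun x _ => (hT.isAcyclic.induce _).card_edgeFinset_le_card_sub_one]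
  simp_rw [(hT.isAcyclic.induce _).card_edgeFinset_eq_card_sub_one_iff]
  refine ⟨fun h x => ?_, fun h x _ => h x⟩
  by_cases hx : x ∈ 𝒮.sup id
  · exact h x hx
  · rintro ⟨S, hS⟩
    exact absurd (le_sup (f := id) S.2 hS) hx

lemma exists_isMaxSpanningTree (h𝒮 : 𝒮.Nonempty) : ∃ T, IsMaxSpanningTree 𝒮 T := by
  have := h𝒮.to_subtype
  obtain ⟨T₀, -, hT₀⟩ := (connected_top (V := {S // S ∈ 𝒮})).exists_isTree_le
  obtain ⟨T, hT, hmax⟩ := Set.exists_max_image {T : SimpleGraph {S // S ∈ 𝒮} | T.IsTree}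
    (jtWeight 𝒮) (Set.toFinite _) ⟨T₀, hT₀⟩
  exact ⟨T, hT, hmax⟩

end

/-- `CDC(𝒮)` admits a junction tree iff every maximum spanning tree of
its intersection graph `K_𝒮` is a junction tree of `CDC(𝒮)`. -/
theorem admits_junctionTree_iff_all_maxSpanningTrees {α : Type*} [DecidableEq α]
    (𝒮 : Finset (Finset α)) (h𝒮 : 𝒮.Nonempty) :
    (∃ T : SimpleGraph {S // S ∈ 𝒮}, IsJunctionTree T (fun S => (S : Finset α))) ↔
      ∀ T : SimpleGraph {S // S ∈ 𝒮}, IsMaxSpanningTree 𝒮 T →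
        IsJunctionTree T (fun S => (S : Finset α)) := by
  constructor
  · rintro ⟨J, hJ⟩ T ⟨hT, hTmax⟩
    have hJw := (jtWeight_eq_jtWeightBound_iff 𝒮 hJ.1).mpr hJ
    refine (jtWeight_eq_jtWeightBound_iff 𝒮 hT).mp
      (le_antisymm (jtWeight_le_jtWeightBound 𝒮 hT.isAcyclic) ?_)
    exact hJw ▸ hTmax J hJ.1
  · intro h
    obtain ⟨T, hT⟩ := exists_isMaxSpanningTree 𝒮 h𝒮
    exact ⟨T, h T hT⟩
end

section
/- A spanning tree T of the intersection graph K_S is a junction tree of CDC(S) if and only if for every edge e of T, the two vertex sets S1 and S2 of the connected components of T - e satisfy (⋃_{S ∈ S1} S) ∩ (⋃_{S ∈ S2} S) ⊆ mid(e). -/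
/-! Every edge `s(a, b)` of a tree is a bridge, and a path runs through it exactly when its two
ends lie on different sides of the cut `T - s(a, b)`; so the edge condition of a junction tree is
the cut condition read along each path. The vertex condition follows from the edge condition,
since every vertex of a path is an endpoint of one of its edges or is its last vertex. -/

namespace SimpleGraph

variable {V : Type*} {G : SimpleGraph V}

theorem IsBridge.mem_edges_of_reachable_deleteEdges {a b c d : V} (hab : G.IsBridge s(a, b))
    (hc : (G.deleteEdges {s(a, b)}).Reachable a c) (hd : (G.deleteEdges {s(a, b)}).Reachable b d)
    (p : G.Walk c d) : s(a, b) ∈ p.edges := by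
  by_contra hp
  exact isBridge_iff.mp hab <|
    hc.trans <| (reachable_deleteEdges_iff_exists_walk.mpr ⟨p, hp⟩).trans hd.symm

theorem Walk.IsTrail.reachable_deleteEdges_of_mem_edges {a b i j : V} {p : G.Walk i j}
    (hp : p.IsTrail) (hab : s(a, b) ∈ p.edges) :
    ((G.deleteEdges {s(a, b)}).Reachable a i ∧ (G.deleteEdges {s(a, b)}).Reachable b j) ∨
      ((G.deleteEdges {s(a, b)}).Reachable b i ∧ (G.deleteEdges {s(a, b)}).Reachable a j) := by
  induction p with
  | nil => simp at hab
  | @cons u v w huv q ih =>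
    rw [Walk.isTrail_cons] at hp
    rw [Walk.edges_cons, List.mem_cons] at hab
    rcases hab with hab | hab
    · have hq : (G.deleteEdges {s(a, b)}).Reachable v w :=
        reachable_deleteEdges_iff_exists_walk.mpr ⟨q, hab ▸ hp.2⟩
      rcases Sym2.eq_iff.mp hab.symm with ⟨rfl, rfl⟩ | ⟨rfl, rfl⟩
      · exact .inl ⟨.rfl, hq⟩
      · exact .inr ⟨.rfl, hq⟩
    · have huv' : (G.deleteEdges {s(a, b)}).Adj u v :=
        (deleteEdges_adj ..).mpr ⟨huv, fun h => hp.2 (h ▸ hab)⟩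
      rcases ih hp.1 hab with ⟨hi, hj⟩ | ⟨hi, hj⟩
      · exact .inl ⟨hi.trans huv'.reachable.symm, hj⟩
      · exact .inr ⟨hi.trans huv'.reachable.symm, hj⟩

theorem Walk.le_of_mem_support {β : Type*} [SemilatticeInf β] (f : V → β) {s : β} {i j : V}
    (p : G.Walk i j) (hj : s ≤ f j) (hedges : ∀ a b, s(a, b) ∈ p.edges → s ≤ f a ⊓ f b)
    {x : V} (hx : x ∈ p.support) : s ≤ f x := by
  rcases Walk.mem_support_iff_exists_mem_edges.mp hx with rfl | ⟨e, he, hxe⟩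
  · exact hj
  · obtain ⟨y, rfl⟩ := Sym2.mem_iff_exists.mp hxe
    exact (hedges x y he).trans inf_le_left

end SimpleGraph

open SimpleGraph

section

variable {ι α : Type*} [DecidableEq α] {G : SimpleGraph ι} {f : ι → Finset α}

theorem IsJunctionTree.inter_subset_of_reachable_deleteEdges (hJ : IsJunctionTree G f)
    {a b c d : ι} (hab : G.Adj a b) (hc : (G.deleteEdges {s(a, b)}).Reachable a c)
    (hd : (G.deleteEdges {s(a, b)}).Reachable b d) : f c ∩ f d ⊆ f a ∩ f b := by
  classical
  obtain ⟨p⟩ := hJ.1.connected.preconnected c d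
  have hbridge : G.IsBridge s(a, b) := isAcyclic_iff_forall_adj_isBridge.mp hJ.1.isAcyclic hab
  exact (hJ.2 c d p.toPath p.toPath.2).2 a b (hbridge.mem_edges_of_reachable_deleteEdges hc hd _)

theorem SimpleGraph.IsTree.isJunctionTree (hG : G.IsTree)
    (hcut : ∀ a b c d, G.Adj a b → (G.deleteEdges {s(a, b)}).Reachable a c →
      (G.deleteEdges {s(a, b)}).Reachable b d → f c ∩ f d ⊆ f a ∩ f b) :
    IsJunctionTree G f := by
  refine ⟨hG, fun i j p hp => ?_⟩
  have hedges : ∀ a b, s(a, b) ∈ p.edges → f i ∩ f j ⊆ f a ∩ f b := by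
    intro a b hab
    have hadj := p.adj_of_mem_edges hab
    rcases hp.isTrail.reachable_deleteEdges_of_mem_edges hab with ⟨hi, hj⟩ | ⟨hi, hj⟩
    · exact hcut a b i j hadj hi hj
    · exact Finset.inter_comm (f i) (f j) ▸ hcut a b j i hadj hj hi
  exact ⟨fun x hx => p.le_of_mem_support f Finset.inter_subset_right hedges hx, hedges⟩

end

/-- A spanning tree `T` of the intersection graph `K_𝒮` is a junction
tree of `CDC(𝒮)` iff for every edge `e = s(A, B)` of `T`, the two components of
`T - e` (the vertices reachable from `A`, resp. from `B`, after deleting `e`)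
satisfy `(⋃_{S ∈ 𝒮1} S) ∩ (⋃_{S ∈ 𝒮2} S) ⊆ mid(e) = A ∩ B`. -/
theorem junctionTree_iff_edge_cut_condition {α : Type*} [DecidableEq α]
    (𝒮 : Finset (Finset α)) (T : SimpleGraph {S // S ∈ 𝒮}) (hT : T.IsTree) :
    IsJunctionTree T (fun S => (S : Finset α)) ↔
      ∀ A B : {S // S ∈ 𝒮}, T.Adj A B →
        ∀ x : α,
          (∃ C : {S // S ∈ 𝒮}, (T.deleteEdges {s(A, B)}).Reachable A C ∧ x ∈ (C : Finset α)) →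
          (∃ C : {S // S ∈ 𝒮}, (T.deleteEdges {s(A, B)}).Reachable B C ∧ x ∈ (C : Finset α)) →
          x ∈ (A : Finset α) ∩ (B : Finset α) := by
  refine ⟨fun hJ A B hAB x ⟨C, hAC, hxC⟩ ⟨D, hBD, hxD⟩ => ?_, fun hcut => ?_⟩
  · exact hJ.inter_subset_of_reachable_deleteEdges hAB hAC hBD (Finset.mem_inter.mpr ⟨hxC, hxD⟩)
  · refine hT.isJunctionTree fun A B C D hAB hAC hBD x hx => ?_
    obtain ⟨hxC, hxD⟩ := Finset.mem_inter.mp hx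
    exact hcut A B hAB x ⟨C, hAC, hxC⟩ ⟨D, hBD, hxD⟩
end

section
/- Let T be a junction tree of CDC(S) and let e be any edge of T. If e partitions the vertex set S into S1 and S2 (the two connected components of T - e), then {(⋃_{S ∈ S1} S) \ mid(e), (⋃_{S ∈ S2} S) \ mid(e)} is a biclique of the conflict graph of CDC(S): every element u of the first set and v of the second set satisfy that {u,v} is contained in no member of S. -/
/-!
Removing the edge `e = AB` splits the tree into the part reachable from `A` and the part
reachable from `B`. A set `X` on the `A` side and a set `D` on the `B` side are joined in the
tree by a path that must cross `e`, so the junction-tree property gives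
`X ∩ D ⊆ mid(e) = A ∩ B`. If some `S ∈ 𝒮` contained `u` and `v`, then `S` lies on one side,
and intersecting it with the set on the other side puts `u` or `v` into `mid(e)`.
-/

open SimpleGraph

section

variable {V : Type*} {G : SimpleGraph V}

lemma SimpleGraph.Walk.reachable_deleteEdges_or {a b x : V} (p : G.Walk x a) :
    (G.deleteEdges {s(a, b)}).Reachable a x ∨ (G.deleteEdges {s(a, b)}).Reachable b x := by
  induction p with
  | nil => exact Or.inl .rfl
  | @cons x z a hxz _ ih =>
    by_cases he : s(x, z) = s(a, b)
    · rcases Sym2.eq_iff.mp he with ⟨rfl, -⟩ | ⟨rfl, -⟩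
      · exact Or.inl .rfl
      · exact Or.inr .rfl
    · have hzx : (G.deleteEdges {s(a, b)}).Reachable z x :=
        (deleteEdges_adj.mpr ⟨hxz, he⟩).reachable.symm
      exact ih.imp (·.trans hzx) (·.trans hzx)

lemma SimpleGraph.Reachable.deleteEdges_or {a b x : V} (h : G.Reachable x a) :
    (G.deleteEdges {s(a, b)}).Reachable a x ∨ (G.deleteEdges {s(a, b)}).Reachable b x :=
  h.elim Walk.reachable_deleteEdges_or

lemma IsJunctionTree.inter_subset_of_reachable_deleteEdges_s10 {α : Type*} [DecidableEq α]
    {f : V → Finset α} (hT : IsJunctionTree G f) {A B X D : V} (hAB : G.Adj A B)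
    (hX : (G.deleteEdges {s(A, B)}).Reachable A X)
    (hD : (G.deleteEdges {s(A, B)}).Reachable B D) :
    f X ∩ f D ⊆ f A ∩ f B := by
  have hbridge : G.IsBridge s(A, B) := isAcyclic_iff_forall_adj_isBridge.mp hT.1.isAcyclic hAB
  have hXD : ¬ (G.deleteEdges {s(A, B)}).Reachable X D :=
    fun h => hbridge (hX.trans (h.trans hD.symm))
  obtain ⟨p, hp⟩ := hT.1.connected.preconnected.exists_isPath X D
  exact (hT.2 X D p hp).2 A B (p.mem_edges_of_not_reachable_deleteEdges hXD)

end

/-- Let `T` be a junction tree of `CDC(𝒮)` and `e = s(A, B)` an edge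
of `T` partitioning the vertices into the components `𝒮1` (reachable from `A` in
`T - e`) and `𝒮2` (reachable from `B`).  Then
`{(⋃_{S ∈ 𝒮1} S) \ mid(e), (⋃_{S ∈ 𝒮2} S) \ mid(e)}` is a biclique of the conflict
graph of `CDC(𝒮)`: any `u` in the first set and `v` in the second set are jointly
contained in no member of `𝒮`. -/
theorem junctionTree_edge_gives_biclique {α : Type*} [DecidableEq α]
    (𝒮 : Finset (Finset α)) (T : SimpleGraph {S // S ∈ 𝒮})
    (hT : IsJunctionTree T (fun S => (S : Finset α)))
    (A B : {S // S ∈ 𝒮}) (hAB : T.Adj A B) :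
    ∀ u v : α,
      (∃ C : {S // S ∈ 𝒮}, (T.deleteEdges {s(A, B)}).Reachable A C ∧ u ∈ (C : Finset α)) →
      u ∉ (A : Finset α) ∩ (B : Finset α) →
      (∃ C : {S // S ∈ 𝒮}, (T.deleteEdges {s(A, B)}).Reachable B C ∧ v ∈ (C : Finset α)) →
      v ∉ (A : Finset α) ∩ (B : Finset α) →
      ∀ S ∈ 𝒮, ¬ (u ∈ S ∧ v ∈ S) := by
  rintro u v ⟨C, hAC, huC⟩ hu ⟨D, hBD, hvD⟩ hv S hS ⟨huS, hvS⟩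
  rcases (hT.1.connected.preconnected ⟨S, hS⟩ A).deleteEdges_or with hAS | hBS
  · exact hv <| hT.inter_subset_of_reachable_deleteEdges_s10 hAB hAS hBD <|
      Finset.mem_inter.mpr ⟨hvS, hvD⟩
  · exact hu <| hT.inter_subset_of_reachable_deleteEdges_s10 hAB hAC hBS <|
      Finset.mem_inter.mpr ⟨huC, huS⟩
end

section
/- Let T be a junction tree of CDC(S), let e be an edge of T partitioning S into S1 and S2, and let G^c_{S2} be the conflict graph of CDC(S2). Then for vertices u, v in ⋃_{S∈S2} S, the pair {u,v} is contained in no member of S if and only if it is contained in no member of S2; i.e., G^c_{S2} equals the induced subgraph of the conflict graph G^c_S on the vertex set (⋃_{S∈S} S) \ ((⋃_{S∈S1} S) \ mid(e)). -/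
/-- Let `T` be a junction tree of `CDC(𝒮)` and `e = s(A, B)` an edge
of `T`, whose deletion splits the vertex set into the component `𝒮1` of `A` and the
component `𝒮2` of `B`.  Then for `u, v ∈ ⋃_{S ∈ 𝒮2} S`, the pair `{u, v}` is
contained in no member of `𝒮` iff it is contained in no member of `𝒮2`; i.e. the
conflict graph of `CDC(𝒮2)` is the induced subgraph of the conflict graph of
`CDC(𝒮)` on `(⋃_{S ∈ 𝒮} S) \ ((⋃_{S ∈ 𝒮1} S) \ mid(e))`. -/
theorem junctionTree_component_conflict_graph {α : Type*} [DecidableEq α]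
    (𝒮 : Finset (Finset α)) (T : SimpleGraph {S // S ∈ 𝒮})
    (hT : IsJunctionTree T (fun S => (S : Finset α)))
    (A B : {S // S ∈ 𝒮}) (hAB : T.Adj A B) :
    ∀ u v : α,
      (∃ C : {S // S ∈ 𝒮}, (T.deleteEdges {s(A, B)}).Reachable B C ∧ u ∈ (C : Finset α)) →
      (∃ C : {S // S ∈ 𝒮}, (T.deleteEdges {s(A, B)}).Reachable B C ∧ v ∈ (C : Finset α)) →
      ((∀ S ∈ 𝒮, ¬ (u ∈ S ∧ v ∈ S)) ↔
        (∀ C : {S // S ∈ 𝒮}, (T.deleteEdges {s(A, B)}).Reachable B C →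
          ¬ (u ∈ (C : Finset α) ∧ v ∈ (C : Finset α)))) := by
  rintro u v ⟨Cu, hCu, hu⟩ ⟨Cv, hCv, hv⟩
  constructor
  · rintro h C _ ⟨huC, hvC⟩
    exact h C C.2 ⟨huC, hvC⟩
  · rintro h S hS ⟨huS, hvS⟩
    by_cases hr : (T.deleteEdges {s(A, B)}).Reachable B ⟨S, hS⟩
    · exact h ⟨S, hS⟩ hr ⟨huS, hvS⟩
    · have key : ∀ (w : α) (C : {S // S ∈ 𝒮}),
          (T.deleteEdges {s(A, B)}).Reachable B C → w ∈ (C : Finset α) → w ∈ S →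
          w ∈ (B : Finset α) := by
        intro w C hC hwC hwS
        obtain ⟨p⟩ := hT.1.isConnected ⟨S, hS⟩ C
        set q := p.toPath with hq
        by_cases he : s(A, B) ∈ q.1.edges
        · have h1 := (hT.2 ⟨S, hS⟩ C q.1 q.2).2 A B he
          have h2 : w ∈ (A : Finset α) ∩ (B : Finset α) :=
            h1 (Finset.mem_inter.mpr ⟨hwS, hwC⟩)
          exact (Finset.mem_inter.mp h2).2
        · exfalso
          have havoid : ∀ e ∈ q.1.edges, e ∉ ({s(A, B)} : Set (Sym2 _)) := by
            intro e heq hmem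
            rw [Set.mem_singleton_iff] at hmem
            subst hmem
            exact he heq
          have : (T.deleteEdges {s(A, B)}).Reachable ⟨S, hS⟩ C :=
            ⟨q.1.toDeleteEdges _ havoid⟩
          exact hr (hC.trans this.symm)
      exact h B (SimpleGraph.Reachable.refl B) ⟨key u Cu hCu hu huS, key v Cv hCv hv hvS⟩
end

section
/- If T is a junction tree of CDC(S) and an edge e of T partitions T into subtrees T1 and T2 with vertex sets S1 and S2 respectively, then T1 is a junction tree of CDC(S1) and T2 is a junction tree of CDC(S2). -/
/-!
Each side of `T` with an edge deleted is a connected subgraph of `T`. A path in it is a path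
of `T` with the same endpoints, vertices and edges, so the junction-tree conditions are
inherited, and a subgraph of an acyclic graph is acyclic.
-/

theorem SimpleGraph.connected_induce_reachable {V : Type*} (G : SimpleGraph V) (u : V) :
    (G.induce {v | G.Reachable u v}).Connected := by
  have hsupp : {v | G.Reachable u v} = (G.connectedComponentMk u).supp := by
    ext v
    exact reachable_comm.trans ConnectedComponent.eq.symm
  exact hsupp ▸ ConnectedComponent.connected_toSimpleGraph _

namespace IsJunctionTree

variable {ι κ α : Type*} [DecidableEq α] {G : SimpleGraph ι} {f : ι → Finset α}

theorem comap (hG : IsJunctionTree G f) {H : SimpleGraph κ} (φ : H →g G)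
    (hφ : Function.Injective φ) (hH : H.Connected) : IsJunctionTree H (f ∘ φ) := by
  refine ⟨⟨hH, hG.1.isAcyclic.comap φ hφ⟩, fun i j p hp => ?_⟩
  obtain ⟨hsupport, hedges⟩ := hG.2 _ _ (p.map φ) (hp.map hφ)
  refine ⟨fun x hx => hsupport _ ?_, fun a b hab => hedges _ _ ?_⟩
  · rw [SimpleGraph.Walk.support_map]
    exact List.mem_map_of_mem hx
  · rw [SimpleGraph.Walk.edges_map]
    exact List.mem_map_of_mem hab

theorem induce_reachable (hG : IsJunctionTree G f) {H : SimpleGraph ι} (hHG : H ≤ G) (u : ι) :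
    IsJunctionTree (H.induce {v | H.Reachable u v}) (fun v => f v) :=
  hG.comap ((SimpleGraph.Hom.ofLE hHG).comp (SimpleGraph.Embedding.induce _).toHom)
    Subtype.val_injective (H.connected_induce_reachable u)

end IsJunctionTree

theorem junctionTree_subtrees_general {α : Type*} [DecidableEq α]
    (𝒮 : Finset (Finset α)) (T : SimpleGraph {S // S ∈ 𝒮})
    (hT : IsJunctionTree T (fun S => (S : Finset α)))
    (A B : {S // S ∈ 𝒮}) :
    IsJunctionTree
      (SimpleGraph.induce {C | (T.deleteEdges {s(A, B)}).Reachable A C}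
        (T.deleteEdges {s(A, B)}))
      (fun C => ((C : {S // S ∈ 𝒮}) : Finset α)) ∧
    IsJunctionTree
      (SimpleGraph.induce {C | (T.deleteEdges {s(A, B)}).Reachable B C}
        (T.deleteEdges {s(A, B)}))
      (fun C => ((C : {S // S ∈ 𝒮}) : Finset α)) :=
  ⟨hT.induce_reachable (SimpleGraph.deleteEdges_le _) A,
    hT.induce_reachable (SimpleGraph.deleteEdges_le _) B⟩

/-- If `T` is a junction tree of `CDC(𝒮)` and deleting an edge
`e = s(A, B)` of `T` yields the two subtrees `T1`, `T2` with vertex sets `𝒮1`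
(the component of `A`) and `𝒮2` (the component of `B`), then `T1` is a junction
tree of `CDC(𝒮1)` and `T2` is a junction tree of `CDC(𝒮2)`. -/
theorem junctionTree_subtrees {α : Type*} [DecidableEq α]
    (𝒮 : Finset (Finset α)) (T : SimpleGraph {S // S ∈ 𝒮})
    (hT : IsJunctionTree T (fun S => (S : Finset α)))
    (A B : {S // S ∈ 𝒮}) (hAB : T.Adj A B) :
    IsJunctionTree
      (SimpleGraph.induce {C | (T.deleteEdges {s(A, B)}).Reachable A C}
        (T.deleteEdges {s(A, B)}))
      (fun C => ((C : {S // S ∈ 𝒮}) : Finset α)) ∧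
    IsJunctionTree
      (SimpleGraph.induce {C | (T.deleteEdges {s(A, B)}).Reachable B C}
        (T.deleteEdges {s(A, B)}))
      (fun C => ((C : {S // S ∈ 𝒮}) : Finset α)) :=
  junctionTree_subtrees_general 𝒮 T hT A B
end

section
/- For integers N > k ≥ 1, the combinatorial disjunctive constraint of SOS k(N), given by the collection S = {[i, i+k-1] : 1 ≤ i ≤ N-k+1} of intervals of k consecutive integers in [1, N], admits a junction tree: the path on vertex sequence S^1, S^2, ..., S^{N-k+1} (with S^i adjacent to S^{i+1}) is a junction tree of CDC(S). -/
open Set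

theorem Set.mem_uIcc_of_notMem_uIcc {α : Type*} [LinearOrder α] {a b x : α}
    (ha : a ∉ uIcc x b) (hb : b ∉ uIcc a x) : x ∈ uIcc a b := by
  simp only [mem_uIcc, not_or, not_and, not_le] at *
  grind

namespace SimpleGraph

variable {α : Type*} [LinearOrder α]

theorem mem_uIcc_of_hasse_adj {a a' b c : α} (h : (hasse α).Adj a a') (hc : c ∈ uIcc a b)
    (hca : c ≠ a) : c ∈ uIcc a' b := by
  rw [mem_uIcc] at hc ⊢
  rcases hc with ⟨hac, hcb⟩ | ⟨hbc, hca'⟩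
  · refine Or.inl ⟨?_, hcb⟩
    have hac := lt_of_le_of_ne hac hca.symm
    rcases h with h | h
    · exact h.ge_of_gt hac
    · exact (h.lt.trans hac).le
  · refine Or.inr ⟨hbc, ?_⟩
    have hca := lt_of_le_of_ne hca' hca
    rcases h with h | h
    · exact (hca.trans h.lt).le
    · exact h.le_of_lt hca

theorem Walk.mem_support_of_mem_uIcc {a b : α} (p : (hasse α).Walk a b) {c : α}
    (hc : c ∈ uIcc a b) : c ∈ p.support := by
  induction p with
  | nil => simp_all
  | @cons u v w hadj q ih =>
    rcases eq_or_ne c u with rfl | hca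
    · exact start_mem_support _
    · exact List.mem_cons_of_mem _ (ih (mem_uIcc_of_hasse_adj hadj hc hca))

theorem Walk.mk_mem_edges_of_covBy {a b x y : α} (p : (hasse α).Walk x y) (hab : a ⋖ b)
    (hx : x ≤ a) (hy : b ≤ y) : s(a, b) ∈ p.edges := by
  induction p with
  | nil => exact absurd (hx.trans_lt hab.lt) hy.not_gt
  | @cons x x' y hadj q ih =>
    rw [edges_cons, List.mem_cons]
    rcases le_or_gt x' a with hx' | hx'
    · exact Or.inr (ih hx' hy)
    · have hxx' : x ⋖ x' := hadj.resolve_right fun h => (h.lt.trans_le hx).not_gt hx'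
      obtain rfl : x = a := le_antisymm hx (hxx'.le_of_lt hx')
      obtain rfl : x' = b := hxx'.unique_right hab
      exact Or.inl rfl

theorem isAcyclic_hasse : (hasse α).IsAcyclic := by
  rw [isAcyclic_iff_forall_adj_isBridge]
  rintro v w (h | h) <;> rw [isBridge_iff_forall_walk_mem_edges] <;> intro p
  · exact p.mk_mem_edges_of_covBy h le_rfl le_rfl
  · simpa [Sym2.eq_swap] using p.reverse.mk_mem_edges_of_covBy h le_rfl le_rfl

theorem isTree_hasse [Nonempty α] [SuccOrder α] [IsSuccArchimedean α] : (hasse α).IsTree :=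
  ⟨⟨hasse_preconnected_of_succ α⟩, isAcyclic_hasse⟩

theorem Walk.IsPath.endpoint_notMem_uIcc {a b x : α} {p : (hasse α).Walk a b} (hp : p.IsPath)
    (hx : x ∈ p.support) (hbx : b ≠ x) : b ∉ uIcc a x := fun hb =>
  Walk.endpoint_notMem_support_takeUntil hp hx hbx ((p.takeUntil x hx).mem_support_of_mem_uIcc hb)

theorem Walk.IsPath.mem_uIcc_of_mem_support {a b x : α} {p : (hasse α).Walk a b}
    (hp : p.IsPath) (hx : x ∈ p.support) : x ∈ uIcc a b := by
  rcases eq_or_ne a x with rfl | hax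
  · exact left_mem_uIcc
  rcases eq_or_ne b x with rfl | hbx
  · exact right_mem_uIcc
  refine mem_uIcc_of_notMem_uIcc (fun ha => ?_) (hp.endpoint_notMem_uIcc hx hbx)
  exact hp.reverse.endpoint_notMem_uIcc (by simpa using hx) hax (uIcc_comm x b ▸ ha)

theorem isJunctionTree_hasse {β : Type*} [DecidableEq β] [Nonempty α] [SuccOrder α]
    [IsSuccArchimedean α] {f : α → Finset β} (hf : ∀ i j x, x ∈ uIcc i j → f i ∩ f j ⊆ f x) :
    IsJunctionTree (hasse α) f := by
  refine ⟨isTree_hasse, fun i j p hp => ?_⟩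
  have hsupp : ∀ x ∈ p.support, f i ∩ f j ⊆ f x := fun x hx =>
    hf i j x (hp.mem_uIcc_of_mem_support hx)
  exact ⟨hsupp, fun a b hab => Finset.subset_inter (hsupp a (p.fst_mem_support_of_mem_edges hab))
    (hsupp b (p.snd_mem_support_of_mem_edges hab))⟩

theorem fromRel_val_add_one_eq_pathGraph (n : ℕ) :
    fromRel (fun i j : Fin n => (i : ℕ) + 1 = j) = pathGraph n := by
  ext i j
  rw [fromRel_adj, pathGraph_adj]
  exact ⟨And.right, fun h => ⟨fun hij => by subst hij; omega, h⟩⟩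

end SimpleGraph

theorem Finset.Icc_inter_Icc_subset_of_mem_uIcc {α β : Type*} [LinearOrder α] [LinearOrder β]
    [LocallyFiniteOrder β] {g h : α → β} (hg : Monotone g) (hh : Monotone h) {i j x : α}
    (hx : x ∈ Set.uIcc i j) : Icc (g i) (h i) ∩ Icc (g j) (h j) ⊆ Icc (g x) (h x) := by
  intro y hy
  simp only [Finset.mem_inter, Finset.mem_Icc] at hy ⊢
  rcases Set.mem_uIcc.mp hx with ⟨hix, hxj⟩ | ⟨hjx, hxi⟩
  · exact ⟨(hg hxj).trans hy.2.1, hy.1.2.trans (hh hix)⟩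
  · exact ⟨(hg hxi).trans hy.1.1, hy.2.2.trans (hh hjx)⟩

theorem sos_k_admits_junction_tree_general (N k : ℕ) :
    IsJunctionTree
      (SimpleGraph.fromRel (fun i j : Fin (N - k + 1) => (i : ℕ) + 1 = (j : ℕ)))
      (fun i : Fin (N - k + 1) => Finset.Icc ((i : ℕ) + 1) ((i : ℕ) + k)) := by
  rw [SimpleGraph.fromRel_val_add_one_eq_pathGraph]
  have hval : Monotone (fun i : Fin (N - k + 1) => (i : ℕ)) := Fin.val_strictMono.monotone
  exact SimpleGraph.isJunctionTree_hasse fun i j x hx =>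
    Finset.Icc_inter_Icc_subset_of_mem_uIcc (hval.add_const 1) (hval.add_const k) hx

/-- For integers `N > k ≥ 1`, the CDC of `SOS k(N)`, given by the
collection of intervals `S^i = [i, i+k-1]` for `1 ≤ i ≤ N-k+1`, admits a junction
tree: the path on `S^1, S^2, ..., S^{N-k+1}` (with `S^i` adjacent to `S^{i+1}`)
is a junction tree.  (Vertex `i : Fin (N-k+1)` is labeled with `[i+1, i+k]`.) -/
theorem sos_k_admits_junction_tree (N k : ℕ) (hk : 1 ≤ k) (hkN : k < N) :
    IsJunctionTree
      (SimpleGraph.fromRel (fun i j : Fin (N - k + 1) => (i : ℕ) + 1 = (j : ℕ)))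
      (fun i : Fin (N - k + 1) => Finset.Icc ((i : ℕ) + 1) ((i : ℕ) + k)) :=
  sos_k_admits_junction_tree_general N k
end

section
/- Let N = 2^b + k - 1 with positive integers b and k ≥ 2, and let S = {[i, i+k-1] : 1 ≤ i ≤ 2^b}. For each i in {0,...,b-1} and j in {0,...,2^i - 1} define A^{i,j} = [1 + j·2^{b-i}, (2j+1)·2^{b-i-1}] and B^{i,j} = [(2j+1)·2^{b-i-1} + k, (j+1)·2^{b-i} + k - 1]. Then the collection {{A^{i,j}, B^{i,j}}} is a biclique cover of the conflict graph of SOS k(N): each pair {A^{i,j}, B^{i,j}} is a biclique of the conflict graph (every element of A^{i,j} differs from every element of B^{i,j} by at least k), and every edge uv of the conflict graph (i.e., every pair with |u - v| ≥ k, u, v ∈ [1,N]) is covered by some biclique. -/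
/-!
`A^{i,j}` ends at `Q = (2j+1)·2^{b-i-1}` and `B^{i,j}` starts at `Q + k`, so each pair is a
biclique. Conversely, for `u + k ≤ v` put `x = u - 1` and `y = v - k`, so that `x < y < 2^b`.
The smallest dyadic block `[j·2^(m+1), (j+1)·2^(m+1))` containing both `x` and `y` has `x` in
its lower and `y` in its upper half; these halves, shifted by `1` and by `k`, are `A^{i,j}` and
`B^{i,j}` with `i = b - m - 1`.
-/

/-- The set `A^{i,j} = [1 + j·2^{b-i}, (2j+1)·2^{b-i-1}]`. -/
def sosA (b i j : ℕ) : Finset ℕ :=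
  Finset.Icc (1 + j * 2 ^ (b - i)) ((2 * j + 1) * 2 ^ (b - i - 1))

/-- The set `B^{i,j} = [(2j+1)·2^{b-i-1} + k, (j+1)·2^{b-i} + k - 1]`. -/
def sosB (b k i j : ℕ) : Finset ℕ :=
  Finset.Icc ((2 * j + 1) * 2 ^ (b - i - 1) + k) ((j + 1) * 2 ^ (b - i) + k - 1)

theorem Nat.exists_dyadic_split {x y : ℕ} (hxy : x < y) :
    ∃ m j, j * 2 ^ (m + 1) ≤ x ∧ x < (2 * j + 1) * 2 ^ m ∧
      (2 * j + 1) * 2 ^ m ≤ y ∧ y < (j + 1) * 2 ^ (m + 1) := by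
  induction y using Nat.strong_induction_on generalizing x with
  | _ y ih =>
    rcases (Nat.div_le_div_right (c := 2) hxy.le).lt_or_eq with hlt | heq
    · obtain ⟨m, j, h₁, h₂, h₃, h₄⟩ := ih (y / 2) (by omega) hlt
      refine ⟨m + 1, j, ?_, ?_, ?_, ?_⟩ <;> rw [pow_succ, ← mul_assoc]
      · exact (Nat.le_div_iff_mul_le two_pos).mp h₁
      · exact (Nat.div_lt_iff_lt_mul two_pos).mp h₂
      · exact (Nat.le_div_iff_mul_le two_pos).mp h₃
      · exact (Nat.div_lt_iff_lt_mul two_pos).mp h₄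
    · exact ⟨0, x / 2, by omega⟩

theorem Nat.exists_dyadic_split_of_lt_two_pow {b x y : ℕ} (hxy : x < y) (hy : y < 2 ^ b) :
    ∃ i < b, ∃ j < 2 ^ i, j * 2 ^ (b - i) ≤ x ∧ x < (2 * j + 1) * 2 ^ (b - i - 1) ∧
      (2 * j + 1) * 2 ^ (b - i - 1) ≤ y ∧ y < (j + 1) * 2 ^ (b - i) := by
  obtain ⟨m, j, h₁, h₂, h₃, h₄⟩ := Nat.exists_dyadic_split hxy
  have hmb : m < b := by
    have : 2 ^ m < 2 ^ b := by nlinarith [Nat.one_le_two_pow (n := m)]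
    exact (Nat.pow_lt_pow_iff_right (by norm_num)).mp this
  have hb : b = (b - m - 1) + (m + 1) := by omega
  have hj : j < 2 ^ (b - m - 1) := by
    have : j * 2 ^ (m + 1) < 2 ^ (b - m - 1) * 2 ^ (m + 1) := by
      rw [← pow_add, ← hb]; omega
    exact Nat.lt_of_mul_lt_mul_right this
  refine ⟨b - m - 1, by omega, j, hj, ?_⟩
  rw [show b - (b - m - 1) = m + 1 by omega, Nat.add_sub_cancel]
  exact ⟨h₁, h₂, h₃, h₄⟩

theorem le_of_mem_sosA_of_mem_sosB {b k i j u v : ℕ} (hu : u ∈ sosA b i j)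
    (hv : v ∈ sosB b k i j) : u + k ≤ v := by
  rw [sosA, Finset.mem_Icc] at hu
  rw [sosB, Finset.mem_Icc] at hv
  omega

theorem exists_mem_sosA_mem_sosB {b k u v : ℕ} (hk : 1 ≤ k) (hu : 1 ≤ u)
    (hv : v ≤ 2 ^ b + k - 1) (huv : u + k ≤ v) :
    ∃ i < b, ∃ j < 2 ^ i, u ∈ sosA b i j ∧ v ∈ sosB b k i j := by
  obtain ⟨i, hi, j, hj, h₁, h₂, h₃, h₄⟩ :=
    Nat.exists_dyadic_split_of_lt_two_pow (b := b) (x := u - 1) (y := v - k)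
      (by omega) (by have := Nat.one_le_two_pow (n := b); omega)
  refine ⟨i, hi, j, hj, ?_, ?_⟩ <;> simp only [sosA, sosB, Finset.mem_Icc] <;> omega

theorem sos_biclique_cover_general (b k : ℕ) (hk : 2 ≤ k) :
    (∀ i < b, ∀ j < 2 ^ i, ∀ u ∈ sosA b i j, ∀ v ∈ sosB b k i j,
      k ≤ ((u : ℤ) - (v : ℤ)).natAbs) ∧
    (∀ u ∈ Finset.Icc 1 (2 ^ b + k - 1), ∀ v ∈ Finset.Icc 1 (2 ^ b + k - 1),
      k ≤ ((u : ℤ) - (v : ℤ)).natAbs →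
      ∃ i < b, ∃ j < 2 ^ i,
        (u ∈ sosA b i j ∧ v ∈ sosB b k i j) ∨ (v ∈ sosA b i j ∧ u ∈ sosB b k i j)) := by
  refine ⟨fun i _ j _ u hu v hv => ?_, fun u hu v hv huv => ?_⟩
  · have := le_of_mem_sosA_of_mem_sosB hu hv
    omega
  · rw [Finset.mem_Icc] at hu hv
    rcases le_or_gt (u + k) v with h | h
    · obtain ⟨i, hi, j, hj, hA, hB⟩ := exists_mem_sosA_mem_sosB (by omega) hu.1 hv.2 h
      exact ⟨i, hi, j, hj, .inl ⟨hA, hB⟩⟩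
    · obtain ⟨i, hi, j, hj, hA, hB⟩ :=
        exists_mem_sosA_mem_sosB (by omega) hv.1 hu.2 (by omega)
      exact ⟨i, hi, j, hj, .inr ⟨hA, hB⟩⟩

/-- For `N = 2^b + k - 1` (`b ≥ 1`, `k ≥ 2`), the pairs
`{A^{i,j}, B^{i,j}}` for `0 ≤ i < b`, `0 ≤ j < 2^i` form a biclique cover of the
conflict graph of `SOS k(N)`: each pair is a biclique (all elements of `A^{i,j}`
and `B^{i,j}` differ by at least `k`), and every edge of the conflict graph
(every pair `u, v ∈ [1, N]` with `|u - v| ≥ k`) is covered by some pair. -/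
theorem sos_biclique_cover (b k : ℕ) (hb : 1 ≤ b) (hk : 2 ≤ k) :
    (∀ i < b, ∀ j < 2 ^ i, ∀ u ∈ sosA b i j, ∀ v ∈ sosB b k i j,
      k ≤ ((u : ℤ) - (v : ℤ)).natAbs) ∧
    (∀ u ∈ Finset.Icc 1 (2 ^ b + k - 1), ∀ v ∈ Finset.Icc 1 (2 ^ b + k - 1),
      k ≤ ((u : ℤ) - (v : ℤ)).natAbs →
      ∃ i < b, ∃ j < 2 ^ i,
        (u ∈ sosA b i j ∧ v ∈ sosB b k i j) ∨ (v ∈ sosA b i j ∧ u ∈ sosB b k i j)) :=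
  sos_biclique_cover_general b k hk
end

section
/- Let N = 2^b + k - 1 with positive integers b, k ≥ 2, let A^{i,j}, B^{i,j} be as in the SOS k biclique construction, and let α^i = ⌈(k - 1 + 2^{b-i-1}) / 2^{b-i}⌉. For integers i ∈ {0,...,b-1} and 0 ≤ p ≤ min{α^i - 1, 2^i - 1}, define L^{i,p} as the union of A^{i, 2q·α^i + p} over q with 2q·α^i + p ≤ 2^i - 1, together with B^{i, (2q+1)·α^i + p} over q with (2q+1)·α^i + p ≤ 2^i - 1; define R^{i,p} symmetrically with the roles of A and B swapped. Then {L^{i,p}, R^{i,p}} is a biclique of the conflict graph of SOS k(N): every u ∈ L^{i,p} and v ∈ R^{i,p} satisfy |u - v| ≥ k. -/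
/-- `α^i = ⌈(k - 1 + 2^{b-i-1}) / 2^{b-i}⌉`, as a natural-number ceiling division. -/
def sosAlpha (b k i : ℕ) : ℕ :=
  (k - 1 + 2 ^ (b - i - 1) + (2 ^ (b - i) - 1)) / 2 ^ (b - i)

lemma ceil_mul (a m : ℕ) (hm : 0 < m) : a ≤ (a + (m - 1)) / m * m := by
  have h1 : m * ((a + (m - 1)) / m) + (a + (m - 1)) % m = a + (m - 1) :=
    Nat.div_add_mod _ _
  have h2 : (a + (m - 1)) % m < m := Nat.mod_lt _ hm
  set q := (a + (m - 1)) / m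
  set r := (a + (m - 1)) % m
  rw [mul_comm]
  have hs : m - 1 + 1 = m := by omega
  linarith

lemma sos_AB (k h α u v j1 j2 : ℕ)
    (hα : k + h ≤ α * (2 * h) + 1)
    (hu1 : 1 + j1 * (2 * h) ≤ u) (hu2 : u ≤ (2 * j1 + 1) * h)
    (hv1 : (2 * j2 + 1) * h + k ≤ v) (hv2 : v ≤ (j2 + 1) * (2 * h) + k - 1)
    (hj : j1 = j2 ∨ j1 + 2 * α ≤ j2 ∨ j2 + 2 * α ≤ j1) :
    k ≤ ((u : ℤ) - v).natAbs := by
  have e1 : j1 * (2 * h) = 2 * (j1 * h) := by ring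
  have e2 : (2 * j1 + 1) * h = 2 * (j1 * h) + h := by ring
  have e3 : (2 * j2 + 1) * h = 2 * (j2 * h) + h := by ring
  have e4 : (j2 + 1) * (2 * h) = 2 * (j2 * h) + 2 * h := by ring
  have e5 : α * (2 * h) = 2 * (α * h) := by ring
  rw [e1] at hu1; rw [e2] at hu2; rw [e3] at hv1; rw [e4] at hv2; rw [e5] at hα
  rcases hj with hj | hj | hj
  · subst hj
    generalize j1 * h = X at hu1 hu2 hv1 hv2
    omega
  · have hmul := Nat.mul_le_mul_right h hj
    rw [add_mul] at hmul
    have e6 : 2 * α * h = 2 * (α * h) := by ring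
    rw [e6] at hmul
    generalize j1 * h = X at hu1 hu2 hmul
    generalize j2 * h = Y at hv1 hv2 hmul
    generalize α * h = Z at hα hmul
    omega
  · have hmul := Nat.mul_le_mul_right h hj
    rw [add_mul] at hmul
    have e6 : 2 * α * h = 2 * (α * h) := by ring
    rw [e6] at hmul
    generalize j1 * h = X at hu1 hu2 hmul
    generalize j2 * h = Y at hv1 hv2 hmul
    generalize α * h = Z at hα hmul
    omega

lemma sos_AA (k h α u v j1 j2 : ℕ)
    (hα : k + h ≤ α * (2 * h) + 1)
    (hu1 : 1 + j1 * (2 * h) ≤ u) (hu2 : u ≤ (2 * j1 + 1) * h)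
    (hv1 : 1 + j2 * (2 * h) ≤ v) (hv2 : v ≤ (2 * j2 + 1) * h)
    (hj : j1 + α ≤ j2 ∨ j2 + α ≤ j1) :
    k ≤ ((u : ℤ) - v).natAbs := by
  have e1 : j1 * (2 * h) = 2 * (j1 * h) := by ring
  have e2 : (2 * j1 + 1) * h = 2 * (j1 * h) + h := by ring
  have e3 : j2 * (2 * h) = 2 * (j2 * h) := by ring
  have e4 : (2 * j2 + 1) * h = 2 * (j2 * h) + h := by ring
  have e5 : α * (2 * h) = 2 * (α * h) := by ring
  rw [e1] at hu1; rw [e2] at hu2; rw [e3] at hv1; rw [e4] at hv2; rw [e5] at hα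
  rcases hj with hj | hj <;>
  · have hmul := Nat.mul_le_mul_right h hj
    rw [add_mul] at hmul
    generalize j1 * h = X at hu1 hu2 hmul
    generalize j2 * h = Y at hv1 hv2 hmul
    generalize α * h = Z at hα hmul
    omega

lemma sos_BB (k h α u v j1 j2 : ℕ)
    (hα : k + h ≤ α * (2 * h) + 1)
    (hu1 : (2 * j1 + 1) * h + k ≤ u) (hu2 : u ≤ (j1 + 1) * (2 * h) + k - 1)
    (hv1 : (2 * j2 + 1) * h + k ≤ v) (hv2 : v ≤ (j2 + 1) * (2 * h) + k - 1)
    (hj : j1 + α ≤ j2 ∨ j2 + α ≤ j1) :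
    k ≤ ((u : ℤ) - v).natAbs := by
  have e1 : (2 * j1 + 1) * h = 2 * (j1 * h) + h := by ring
  have e2 : (j1 + 1) * (2 * h) = 2 * (j1 * h) + 2 * h := by ring
  have e3 : (2 * j2 + 1) * h = 2 * (j2 * h) + h := by ring
  have e4 : (j2 + 1) * (2 * h) = 2 * (j2 * h) + 2 * h := by ring
  have e5 : α * (2 * h) = 2 * (α * h) := by ring
  rw [e1] at hu1; rw [e2] at hu2; rw [e3] at hv1; rw [e4] at hv2; rw [e5] at hα
  rcases hj with hj | hj <;>
  · have hmul := Nat.mul_le_mul_right h hj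
    rw [add_mul] at hmul
    generalize j1 * h = X at hu1 hu2 hmul
    generalize j2 * h = Y at hv1 hv2 hmul
    generalize α * h = Z at hα hmul
    omega
/-- For `N = 2^b + k - 1` (`b ≥ 1`, `k ≥ 2`), `i < b` and
`p ≤ min(α^i - 1, 2^i - 1)`, the merged pair `{L^{i,p}, R^{i,p}}`, where
`L^{i,p} = ⋃_q A^{i, 2qα^i + p} ∪ ⋃_q B^{i, (2q+1)α^i + p}` (indices at most
`2^i - 1`) and `R^{i,p}` is defined symmetrically, is a biclique of the conflict
graph of `SOS k(N)`: every `u ∈ L^{i,p}` and `v ∈ R^{i,p}` satisfy `|u - v| ≥ k`. -/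
theorem sos_merged_biclique (b k : ℕ) (hb : 1 ≤ b) (hk : 2 ≤ k)
    (i : ℕ) (hi : i < b) (p : ℕ)
    (hp : p ≤ min (sosAlpha b k i - 1) (2 ^ i - 1)) :
    ∀ u v : ℕ,
      ((∃ q : ℕ, 2 * q * sosAlpha b k i + p ≤ 2 ^ i - 1 ∧
          u ∈ sosA b i (2 * q * sosAlpha b k i + p)) ∨
       (∃ q : ℕ, (2 * q + 1) * sosAlpha b k i + p ≤ 2 ^ i - 1 ∧
          u ∈ sosB b k i ((2 * q + 1) * sosAlpha b k i + p))) →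
      ((∃ q : ℕ, 2 * q * sosAlpha b k i + p ≤ 2 ^ i - 1 ∧
          v ∈ sosB b k i (2 * q * sosAlpha b k i + p)) ∨
       (∃ q : ℕ, (2 * q + 1) * sosAlpha b k i + p ≤ 2 ^ i - 1 ∧
          v ∈ sosA b i ((2 * q + 1) * sosAlpha b k i + p))) →
      k ≤ ((u : ℤ) - (v : ℤ)).natAbs := by
  intro u v hu hv
  set α := sosAlpha b k i with hαdef
  have hbi : b - i = (b - i - 1) + 1 := by omega
  have hmm : (2:ℕ) ^ (b - i) = 2 * 2 ^ (b - i - 1) := by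
    rw [Nat.sub_sub, show b - i = b - (i + 1) + 1 from by omega, pow_succ]; ring
  have h1 : k - 1 + 2 ^ (b - i - 1) ≤ α * (2 ^ (b - i)) := by
    rw [hαdef]; unfold sosAlpha
    exact ceil_mul _ _ (by positivity)
  rw [hmm] at h1
  have hα : k + 2 ^ (b - i - 1) ≤ α * (2 * 2 ^ (b - i - 1)) + 1 := by
    have hs : k - 1 + 1 = k := by omega
    linarith
  simp only [sosA, sosB, Finset.mem_Icc, hmm] at hu hv
  rcases hu with ⟨q, hq, hu1, hu2⟩ | ⟨q, hq, hu1, hu2⟩ <;>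
    rcases hv with ⟨q', hq', hv1, hv2⟩ | ⟨q', hq', hv1, hv2⟩
  · -- u ∈ A (even), v ∈ B (even)
    refine sos_AB k _ α u v _ _ hα hu1 hu2 hv1 hv2 ?_
    rcases Nat.lt_trichotomy q q' with hlt | he | hlt
    · right; left
      have hm := Nat.mul_le_mul_right α (show 2 * q + 2 ≤ 2 * q' by omega)
      have e : (2 * q + 2) * α = 2 * q * α + 2 * α := by ring
      linarith
    · left; rw [he]
    · right; right
      have hm := Nat.mul_le_mul_right α (show 2 * q' + 2 ≤ 2 * q by omega)
      have e : (2 * q' + 2) * α = 2 * q' * α + 2 * α := by ring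
      linarith
  · -- u ∈ A (even), v ∈ A (odd)
    refine sos_AA k _ α u v _ _ hα hu1 hu2 hv1 hv2 ?_
    rcases le_or_gt q q' with hle | hlt
    · left
      have hm := Nat.mul_le_mul_right α (show 2 * q + 1 ≤ 2 * q' + 1 by omega)
      have e : (2 * q + 1) * α = 2 * q * α + α := by ring
      linarith
    · right
      have hm := Nat.mul_le_mul_right α (show 2 * q' + 2 ≤ 2 * q by omega)
      have e : (2 * q' + 2) * α = (2 * q' + 1) * α + α := by ring
      linarith
  · -- u ∈ B (odd), v ∈ B (even)
    refine sos_BB k _ α u v _ _ hα hu1 hu2 hv1 hv2 ?_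
    rcases le_or_gt q' q with hle | hlt
    · right
      have hm := Nat.mul_le_mul_right α (show 2 * q' + 1 ≤ 2 * q + 1 by omega)
      have e : (2 * q' + 1) * α = 2 * q' * α + α := by ring
      linarith
    · left
      have hm := Nat.mul_le_mul_right α (show 2 * q + 2 ≤ 2 * q' by omega)
      have e : (2 * q + 2) * α = (2 * q + 1) * α + α := by ring
      linarith
  · -- u ∈ B (odd), v ∈ A (odd)
    rw [show ((u : ℤ) - v) = -((v : ℤ) - u) by ring, Int.natAbs_neg]
    refine sos_AB k _ α v u _ _ hα hv1 hv2 hu1 hu2 ?_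
    rcases Nat.lt_trichotomy q' q with hlt | he | hlt
    · right; left
      have hm := Nat.mul_le_mul_right α (show 2 * q' + 3 ≤ 2 * q + 1 by omega)
      have e : (2 * q' + 3) * α = (2 * q' + 1) * α + 2 * α := by ring
      linarith
    · left; rw [he]
    · right; right
      have hm := Nat.mul_le_mul_right α (show 2 * q + 3 ≤ 2 * q' + 1 by omega)
      have e : (2 * q + 3) * α = (2 * q + 1) * α + 2 * α := by ring
      linarith
end

section
/- For positive integers b ≥ 1 and k ≥ 2, the sum over i from 0 to b-1 of min{2^i, ⌈(k - 1 + 2^{b-i-1}) / 2^{b-i}⌉} is at most b + k - 2. -/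
lemma half_div (q m : ℕ) (hq : 0 < q) : (m + q) / (2*q) + m / (2*q) = m / q := by
  obtain ⟨a, r, hr, rfl⟩ : ∃ a r, r < 2*q ∧ m = 2*q*a + r :=
    ⟨m / (2*q), m % (2*q), Nat.mod_lt _ (by positivity), (Nat.div_add_mod m (2*q)).symm⟩
  have h2q : 0 < 2*q := by positivity
  rw [show 2*q*a + r + q = 2*q*a + (r + q) by ring, Nat.mul_add_div h2q,
    Nat.mul_add_div h2q, show 2*q*a + r = q*(2*a) + r by ring, Nat.mul_add_div hq,
    Nat.div_eq_of_lt hr]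
  have : (r + q) / (2*q) = r / q := by
    rcases lt_or_ge r q with h | h
    · rw [Nat.div_eq_of_lt h, Nat.div_eq_of_lt (by omega)]
    · have e1 : (r + q) / (2*q) = 1 := Nat.div_eq_of_lt_le (by omega) (by omega)
      have e2 : r / q = 1 := Nat.div_eq_of_lt_le (by omega) (by omega)
      rw [e1, e2]
  omega

lemma term_bound (m i : ℕ) :
    ⌈((m:ℚ) + 1 + 2^i) / 2^(i+1)⌉ ≤ 1 + ((m / 2^i : ℕ) : ℤ) - ((m / 2^(i+1) : ℕ) : ℤ) := by
  rw [Int.ceil_le, div_le_iff₀ (by positivity)]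
  have key : (m + 2^i) / (2^(i+1)) + m / (2^(i+1)) = m / 2^i := by
    have := half_div (2^i) m (by positivity)
    rwa [show 2*2^i = 2^(i+1) by ring] at this
  set n : ℕ := (m + 2^i) / 2^(i+1) with hn
  have h1 : m + 2^i < n * 2^(i+1) + 2^(i+1) := Nat.lt_div_mul_add (by positivity)
  push_cast [← key]
  have h1' : m + 2^i + 1 ≤ n * 2^(i+1) + 2^(i+1) := h1
  have h3 : (m : ℚ) + 2^i + 1 ≤ n * 2^(i+1) + 2^(i+1) := by exact_mod_cast h1'
  nlinarith [h3]

/-- For positive integers `b ≥ 1` and `k ≥ 2`,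
`∑_{i=0}^{b-1} min{2^i, ⌈(k - 1 + 2^{b-i-1}) / 2^{b-i}⌉} ≤ b + k - 2`. -/
theorem sos_biclique_count_bound (b k : ℕ) (hb : 1 ≤ b) (hk : 2 ≤ k) :
    ∑ i ∈ Finset.range b,
        min ((2 : ℤ) ^ i) ⌈(((k : ℚ) - 1 + 2 ^ (b - i - 1)) / 2 ^ (b - i))⌉ ≤
      (b : ℤ) + (k : ℤ) - 2 := by
  obtain ⟨m, rfl⟩ : ∃ m, k = m + 2 := ⟨k - 2, by omega⟩
  set G : ℕ → ℤ := fun j => ⌈((m:ℚ) + 1 + 2^j) / 2^(j+1)⌉ with hG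
  have step1 : ∑ i ∈ Finset.range b,
      min ((2 : ℤ) ^ i) ⌈(((m + 2 : ℕ) : ℚ) - 1 + 2 ^ (b - i - 1)) / 2 ^ (b - i)⌉
      ≤ ∑ i ∈ Finset.range b, G (b - 1 - i) := by
    apply Finset.sum_le_sum
    intro i hi
    simp only [Finset.mem_range] at hi
    have e1 : b - i - 1 = b - 1 - i := by omega
    have e2 : b - i = (b - 1 - i) + 1 := by omega
    have : (((m + 2 : ℕ) : ℚ) - 1 + 2 ^ (b - i - 1)) / 2 ^ (b - i)
        = ((m:ℚ) + 1 + 2^(b-1-i)) / 2^((b-1-i)+1) := by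
      rw [e1, e2]; push_cast; ring_nf
    rw [this]
    exact min_le_right _ _
  have step2 : ∑ i ∈ Finset.range b, G (b - 1 - i) = ∑ j ∈ Finset.range b, G j :=
    Finset.sum_range_reflect G b
  have step3 : ∑ j ∈ Finset.range b, G j ≤
      ∑ j ∈ Finset.range b, (1 + (((m / 2^j : ℕ) : ℤ) - ((m / 2^(j+1) : ℕ) : ℤ))) := by
    apply Finset.sum_le_sum
    intro j _
    have := term_bound m j
    simp only [hG]
    linarith
  have step4 : ∑ j ∈ Finset.range b, (1 + (((m / 2^j : ℕ) : ℤ) - ((m / 2^(j+1) : ℕ) : ℤ)))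
      = b + (((m / 2^0 : ℕ) : ℤ) - ((m / 2^b : ℕ) : ℤ)) := by
    rw [Finset.sum_add_distrib, Finset.sum_const, Finset.card_range,
      Finset.sum_range_sub' (fun j => ((m / 2^j : ℕ) : ℤ))]
    simp
  have h5 : (0:ℤ) ≤ ((m / 2^b : ℕ) : ℤ) := Int.natCast_nonneg _
  have h6 : ((m / 2^0 : ℕ) : ℤ) = m := by simp
  have h7 : ((m + 2 : ℕ) : ℤ) = (m:ℤ) + 2 := by push_cast; ring
  calc _ ≤ ∑ i ∈ Finset.range b, G (b - 1 - i) := step1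
    _ = ∑ j ∈ Finset.range b, G j := step2
    _ ≤ _ := step3
    _ = b + (((m / 2^0 : ℕ) : ℤ) - ((m / 2^b : ℕ) : ℤ)) := step4
    _ ≤ (b : ℤ) + ((m + 2 : ℕ) : ℤ) - 2 := by rw [h6, h7]; linarith
end
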